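/- arXiv:1304.6324 — 6 statements merged into one kernel-verified Lean document; each statement's English description precedes it below -/
import Mathlib

section
/- Let (G, 𝒢) and (U, 𝒰) be measurable spaces and let 𝒩 be a σ-ideal of (G, 2^G). If Y : G × U → ℝ is measurable with respect to the σ-algebra (𝒢 ∨ 𝒩) ⊗ 𝒰, then there exist a (𝒢 ⊗ 𝒰)-measurable map Ỹ : G × U → ℝ and a set N ∈ 𝒩 such that for every x ∉ N one has Y(x, u) = Ỹ(x, u) for all u ∈ U. -/
open MeasurableSpace MeasureTheory Set Filter Topology

/-- Auxiliary: pointwise limit extraction for a sequence of measurable real functions. -/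
theorem aux_limit {β : Type*} (m : MeasurableSpace β) (f : ℕ → β → ℝ)
    (hf : ∀ n, @Measurable β ℝ m _ (f n)) :
    ∃ F : β → ℝ, @Measurable β ℝ m _ F ∧
      ∀ p, (∃ c, Filter.Tendsto (fun n => f n p) Filter.atTop (nhds c)) →
        Filter.Tendsto (fun n => f n p) Filter.atTop (nhds (F p)) := by
  classical
  letI := m
  have hC : MeasurableSet {p | ∃ c, Tendsto (fun n => f n p) atTop (𝓝 c)} :=
    measurableSet_exists_tendsto hf
  set C := {p | ∃ c, Tendsto (fun n => f n p) atTop (𝓝 c)} with hCdef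
  refine ⟨fun p => if p ∈ C then limUnder atTop (fun n => f n p) else 0, ?_, ?_⟩
  · have hfn : ∀ n, Measurable (fun p => if p ∈ C then f n p else 0) := fun n =>
      Measurable.ite hC (hf n) measurable_const
    apply measurable_of_tendsto_metrizable hfn
    rw [tendsto_pi_nhds]
    intro p
    by_cases hp : p ∈ C
    · simp only [hp, if_true]
      obtain ⟨c, hc⟩ := hp
      rw [hc.limUnder_eq]
      exact hc
    · simp only [hp, if_false]
      exact tendsto_const_nhds
  · intro p hp
    obtain ⟨c, hc⟩ := hp
    simp only [Set.mem_setOf_eq] at *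
    rw [if_pos ⟨c, hc⟩, hc.limUnder_eq]
    exact hc

/-- **Parametrized factorization lemma (Lemma 2).**
Let `(G, mG)` and `(U, mU)` be measurable spaces and `N` a σ-ideal of `(G, 2^G)`.
If `Y : G × U → ℝ` is measurable with respect to `(mG ∨ N) ⊗ mU`, then there is a
`mG ⊗ mU`-measurable map `Ytil` and a set `N₀ ∈ N` such that `Y (x, ·) = Ytil (x, ·)`
for all `x ∉ N₀`. -/
theorem stmt_0 {G U : Type*} (mG : MeasurableSpace G) (mU : MeasurableSpace U)
    (N : Set (Set G))
    (hN_empty : (∅ : Set G) ∈ N)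
    (hN_subset : ∀ A B : Set G, A ∈ N → B ⊆ A → B ∈ N)
    (hN_iUnion : ∀ f : ℕ → Set G, (∀ n, f n ∈ N) → (⋃ n, f n) ∈ N)
    (Y : G × U → ℝ)
    (hY : @Measurable (G × U) ℝ ((mG ⊔ generateFrom N).prod mU) _ Y) :
    ∃ Ytil : G × U → ℝ, @Measurable (G × U) ℝ (mG.prod mU) _ Ytil ∧
      ∃ N₀ ∈ N, ∀ x ∉ N₀, ∀ u : U, Y (x, u) = Ytil (x, u) := by
  classical
  set mprod : MeasurableSpace (G × U) := mG.prod mU with hmprod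
  -- N is closed under countable unions over countable index sets
  have hN_cUnion : ∀ (s : Set ℝ) (f : ℝ → Set G), s.Countable →
      (∀ i, f i ∈ N) → (⋃ i ∈ s, f i) ∈ N := by
    intro s f hs hf
    rcases s.eq_empty_or_nonempty with rfl | hne
    · simpa using hN_empty
    · obtain ⟨e, rfl⟩ := hs.exists_eq_range hne
      rw [Set.biUnion_range]
      exact hN_iUnion _ fun n => hf _
  -- the key property
  set P : Set (G × U) → Prop := fun S =>
    ∃ T, MeasurableSet[mprod] T ∧ ∃ N₀ ∈ N, ∀ x ∉ N₀, ∀ u, ((x, u) ∈ S ↔ (x, u) ∈ T)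
    with hPdef
  -- P defines a σ-algebra
  set M : MeasurableSpace (G × U) :=
    { MeasurableSet' := P
      measurableSet_empty := ⟨∅, @MeasurableSet.empty _ mprod, ∅, hN_empty,
        fun x _ u => Iff.rfl⟩
      measurableSet_compl := by
        rintro S ⟨T, hT, N₀, hN₀, hST⟩
        exact ⟨Tᶜ, hT.compl, N₀, hN₀, fun x hx u => by
          simp only [Set.mem_compl_iff]
          exact not_congr (hST x hx u)⟩
      measurableSet_iUnion := by
        intro f hf
        choose T hT N₀ hN₀ hfT using hf
        refine ⟨⋃ n, T n, MeasurableSet.iUnion hT, ⋃ n, N₀ n, hN_iUnion _ hN₀, ?_⟩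
        intro x hx u
        simp only [Set.mem_iUnion]
        exact exists_congr fun n =>
          hfT n x (fun h => hx (Set.mem_iUnion.2 ⟨n, h⟩)) u } with hMdef
  -- the big σ-algebra is contained in M
  have hle : (mG ⊔ generateFrom N).prod mU ≤ M := by
    rw [MeasurableSpace.prod]
    apply sup_le
    · rw [MeasurableSpace.comap_le_iff_le_map]
      apply sup_le
      · intro A hA
        exact ⟨Prod.fst ⁻¹' A, @measurable_fst G U mG mU A hA, ∅, hN_empty,
          fun x hx u => Iff.rfl⟩
      · rw [MeasurableSpace.generateFrom_le_iff]
        intro A hA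
        exact ⟨∅, @MeasurableSet.empty _ mprod, A, hA, fun x hx u => by
          simp only [Set.mem_preimage, Set.mem_empty_iff_false, iff_false]
          exact hx⟩
    · rw [MeasurableSpace.comap_le_iff_le_map]
      intro B hB
      exact ⟨Prod.snd ⁻¹' B, @measurable_snd G U mG mU _ hB, ∅, hN_empty,
        fun x hx u => Iff.rfl⟩
  have key : ∀ S, MeasurableSet[(mG ⊔ generateFrom N).prod mU] S → P S := fun S hS => hle S hS
  -- approximate Y by simple functions
  letI mbig : MeasurableSpace (G × U) := (mG ⊔ generateFrom N).prod mU
  let g : ℕ → MeasureTheory.SimpleFunc (G × U) ℝ := fun n =>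
    MeasureTheory.SimpleFunc.approxOn Y hY Set.univ 0 (Set.mem_univ 0) n
  have hg_tendsto : ∀ p, Tendsto (fun n => g n p) atTop (𝓝 (Y p)) := fun p =>
    MeasureTheory.SimpleFunc.tendsto_approxOn hY (Set.mem_univ 0) (by simp)
  have hgP : ∀ (n : ℕ) (c : ℝ), P ((g n) ⁻¹' {c}) := fun n c =>
    key _ ((g n).measurableSet_fiber c)
  choose T hT N' hN' hTN using hgP
  -- the modified simple functions
  set ftil : ℕ → (G × U) → ℝ := fun n p =>
    ∑ c ∈ (g n).range, (T n c).indicator (fun _ => c) p with hftil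
  have hftil_meas : ∀ n, @Measurable (G × U) ℝ mprod _ (ftil n) := by
    intro n
    apply Finset.measurable_sum
    intro c _
    exact Measurable.indicator (@measurable_const ℝ (G × U) _ mprod c) (hT n c)
  obtain ⟨F, hF_meas, hF_tendsto⟩ := aux_limit mprod ftil hftil_meas
  -- the exceptional set
  set Nbig : Set G := ⋃ n, ⋃ c ∈ ((g n).range : Set ℝ), N' n c with hNbig
  have hNbig_mem : Nbig ∈ N :=
    hN_iUnion _ fun n => hN_cUnion _ _ (Finset.countable_toSet _) (hN' n)
  refine ⟨F, hF_meas, Nbig, hNbig_mem, ?_⟩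
  intro x hx u
  have hx' : ∀ n c, c ∈ (g n).range → x ∉ N' n c := by
    intro n c hc hxc
    exact hx (Set.mem_iUnion.2 ⟨n, Set.mem_iUnion₂.2 ⟨c, hc, hxc⟩⟩)
  have heq : ∀ n, ftil n (x, u) = g n (x, u) := by
    intro n
    rw [hftil]
    have hval : g n (x, u) ∈ (g n).range := MeasureTheory.SimpleFunc.mem_range_self _ _
    calc (∑ c ∈ (g n).range, (T n c).indicator (fun _ => c) (x, u))
        = ∑ c ∈ (g n).range, if g n (x, u) = c then c else 0 := by
          refine Finset.sum_congr rfl fun c hc => ?_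
          rw [Set.indicator_apply]
          have h1 := (hTN n c x (hx' n c hc) u).symm
          simp only [Set.mem_preimage, Set.mem_singleton_iff] at h1
          exact if_congr h1 rfl rfl
      _ = g n (x, u) := by rw [Finset.sum_ite_eq (g n).range (g n (x, u)) (fun c => c),
            if_pos hval]
  have hlim : Tendsto (fun n => ftil n (x, u)) atTop (𝓝 (Y (x, u))) := by
    simp only [heq]
    exact hg_tendsto (x, u)
  have := hF_tendsto (x, u) ⟨Y (x, u), hlim⟩
  exact tendsto_nhds_unique hlim this
end

section
/- Let (G, 𝒢) and (U, 𝒰) be measurable spaces and let 𝒩 be a σ-ideal of (G, 2^G). Then the product σ-algebra (𝒢 ∨ 𝒩) ⊗ 𝒰 on G × U equals the smallest σ-algebra on G × U containing the product σ-algebra 𝒢 ⊗ 𝒰 together with all products N × B with N ∈ 𝒩 and B ∈ 𝒰. -/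
open MeasurableSpace Set MeasureTheory

/-- **Step 2 of the proof of Lemma 2.**
For measurable spaces `(G, mG)`, `(U, mU)` and a σ-ideal `N` of `(G, 2^G)`, the
product σ-algebra `(mG ∨ N) ⊗ mU` equals the smallest σ-algebra on `G × U`
containing the product σ-algebra `mG ⊗ mU` together with all products `n ×ˢ B`
with `n ∈ N` and `B ∈ mU`. -/
theorem stmt_2 {G U : Type*} (mG : MeasurableSpace G) (mU : MeasurableSpace U)
    (N : Set (Set G))
    (hN_empty : (∅ : Set G) ∈ N)
    (hN_subset : ∀ A B : Set G, A ∈ N → B ⊆ A → B ∈ N)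
    (hN_iUnion : ∀ f : ℕ → Set G, (∀ n, f n ∈ N) → (⋃ n, f n) ∈ N) :
    (mG ⊔ generateFrom N).prod mU
      = mG.prod mU ⊔ generateFrom
          {S : Set (G × U) | ∃ n ∈ N, ∃ B : Set U, MeasurableSet[mU] B ∧ S = n ×ˢ B} := by
  apply le_antisymm
  · show ((mG ⊔ generateFrom N).comap Prod.fst ⊔ mU.comap Prod.snd) ≤ _
    rw [MeasurableSpace.comap_sup, MeasurableSpace.comap_generateFrom]
    refine sup_le (sup_le ?_ ?_) ?_
    · exact le_trans (le_sup_left : mG.comap Prod.fst ≤ mG.prod mU) le_sup_left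
    · refine le_trans ?_ (le_sup_right : _ ≤ mG.prod mU ⊔ _)
      apply generateFrom_le
      rintro s ⟨n, hn, rfl⟩
      apply measurableSet_generateFrom
      exact ⟨n, hn, univ, MeasurableSet.univ, (Set.prod_univ).symm⟩
    · exact le_trans (le_sup_right : mU.comap Prod.snd ≤ mG.prod mU) le_sup_left
  · refine sup_le ?_ ?_
    · show (mG.comap Prod.fst ⊔ mU.comap Prod.snd) ≤ (mG ⊔ generateFrom N).prod mU
      exact sup_le (le_trans (MeasurableSpace.comap_mono le_sup_left) le_sup_left) le_sup_right
    · apply generateFrom_le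
      rintro S ⟨n, hn, B, hB, rfl⟩
      have hn' : MeasurableSet[mG ⊔ generateFrom N] n :=
        (le_sup_right : generateFrom N ≤ mG ⊔ generateFrom N) _ (measurableSet_generateFrom hn)
      exact MeasurableSet.prod hn' hB
end

section
/- Let (G, 𝒢) and (U, 𝒰) be measurable spaces and let 𝒩 be a σ-ideal of (G, 2^G). Then for every set A belonging to the product σ-algebra (𝒢 ∨ 𝒩) ⊗ 𝒰 there exist a set Ǎ ∈ 𝒢 ⊗ 𝒰 and a set N ∈ 𝒩 such that for every x ∉ N and every u ∈ U, (x, u) ∈ A if and only if (x, u) ∈ Ǎ; equivalently, the symmetric difference A △ Ǎ is contained in N × U. -/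
open MeasurableSpace Set MeasureTheory

lemma symmDiff_iUnion_subset {α : Type*} (f g : ℕ → Set α) :
    symmDiff (⋃ n, f n) (⋃ n, g n) ⊆ ⋃ n, symmDiff (f n) (g n) := by
  intro x hx
  rw [Set.mem_symmDiff] at hx
  rcases hx with ⟨hf, hg⟩ | ⟨hg, hf⟩
  · rw [mem_iUnion] at hf
    obtain ⟨n, hn⟩ := hf
    exact mem_iUnion.2 ⟨n, Set.mem_symmDiff.2 (Or.inl ⟨hn, fun h => hg (mem_iUnion.2 ⟨n, h⟩)⟩)⟩
  · rw [mem_iUnion] at hg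
    obtain ⟨n, hn⟩ := hg
    exact mem_iUnion.2 ⟨n, Set.mem_symmDiff.2 (Or.inr ⟨hn, fun h => hf (mem_iUnion.2 ⟨n, h⟩)⟩)⟩

lemma approx1 {G : Type*} (mG : MeasurableSpace G) (N : Set (Set G))
    (hN_empty : (∅ : Set G) ∈ N)
    (hN_subset : ∀ A B : Set G, A ∈ N → B ⊆ A → B ∈ N)
    (hN_iUnion : ∀ f : ℕ → Set G, (∀ n, f n ∈ N) → (⋃ n, f n) ∈ N)
    (B : Set G) (hB : MeasurableSet[mG ⊔ generateFrom N] B) :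
    ∃ B' : Set G, MeasurableSet[mG] B' ∧ ∃ n ∈ N, symmDiff B B' ⊆ n := by
  have h : mG ⊔ generateFrom N = generateFrom ({s | MeasurableSet[mG] s} ∪ N) := by
    rw [← generateFrom_sup_generateFrom, generateFrom_measurableSet]
  rw [h] at hB
  induction B, hB using generateFrom_induction with
  | hC t ht _ =>
    rcases ht with ht | ht
    · exact ⟨t, ht, ∅, hN_empty, by simp [symmDiff_self]⟩
    · exact ⟨∅, MeasurableSet.empty, t, ht, by intro x hx; rw [Set.mem_symmDiff] at hx; tauto⟩
  | empty => exact ⟨∅, MeasurableSet.empty, ∅, hN_empty, by simp⟩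
  | compl t ht ih =>
    obtain ⟨B', hB', n, hn, hsub⟩ := ih
    exact ⟨B'ᶜ, hB'.compl, n, hn, by rwa [compl_symmDiff_compl]⟩
  | iUnion f hf ih =>
    choose B' hB' n hn hsub using ih
    refine ⟨⋃ i, B' i, MeasurableSet.iUnion hB', ⋃ i, n i, hN_iUnion _ hn, ?_⟩
    exact (symmDiff_iUnion_subset f B').trans (Set.iUnion_mono hsub)

/-- **Set version of Lemma 2 (steps 1–4).**
Let `(G, mG)`, `(U, mU)` be measurable spaces and `N` a σ-ideal of `(G, 2^G)`.
For every set `A` in the product σ-algebra `(mG ∨ N) ⊗ mU` there are a set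
`Ach ∈ mG ⊗ mU` and a set `N₀ ∈ N` such that for all `x ∉ N₀` and all `u`,
`(x, u) ∈ A ↔ (x, u) ∈ Ach`; equivalently `A △ Ach ⊆ N₀ ×ˢ univ`. -/
theorem stmt_4 {G U : Type*} (mG : MeasurableSpace G) (mU : MeasurableSpace U)
    (N : Set (Set G))
    (hN_empty : (∅ : Set G) ∈ N)
    (hN_subset : ∀ A B : Set G, A ∈ N → B ⊆ A → B ∈ N)
    (hN_iUnion : ∀ f : ℕ → Set G, (∀ n, f n ∈ N) → (⋃ n, f n) ∈ N)
    (A : Set (G × U))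
    (hA : MeasurableSet[(mG ⊔ generateFrom N).prod mU] A) :
    ∃ Ach : Set (G × U), MeasurableSet[mG.prod mU] Ach ∧
      ∃ N₀ ∈ N,
        (∀ x ∉ N₀, ∀ u : U, (x, u) ∈ A ↔ (x, u) ∈ Ach) ∧
        symmDiff A Ach ⊆ N₀ ×ˢ (univ : Set U) := by
  set mG' := mG ⊔ generateFrom N with hmG'
  have key : ∀ A : Set (G × U), MeasurableSet[mG'.prod mU] A →
      ∃ Ach : Set (G × U), MeasurableSet[mG.prod mU] Ach ∧
        ∃ N₀ ∈ N, symmDiff A Ach ⊆ N₀ ×ˢ (univ : Set U) := by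
    intro A hA
    have hgen : mG'.prod mU =
        generateFrom (image2 (· ×ˢ ·) { s : Set G | MeasurableSet[mG'] s}
          { t : Set U | MeasurableSet[mU] t}) :=
      (@generateFrom_prod G U mG' mU).symm
    rw [hgen] at hA
    induction A, hA using generateFrom_induction with
    | hC t ht _ =>
      obtain ⟨s, hs, u, hu, rfl⟩ := ht
      obtain ⟨s', hs', n, hn, hsub⟩ := approx1 mG N hN_empty hN_subset hN_iUnion s hs
      refine ⟨s' ×ˢ u, @MeasurableSet.prod G U mG mU s' u hs' hu, n, hn, ?_⟩
      intro ⟨x, y⟩ hxy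
      rw [Set.mem_symmDiff] at hxy
      constructor
      · apply hsub
        rw [Set.mem_symmDiff]
        rcases hxy with ⟨⟨h1, h2⟩, h3⟩ | ⟨⟨h1, h2⟩, h3⟩
        · exact Or.inl ⟨h1, fun hs => h3 ⟨hs, h2⟩⟩
        · exact Or.inr ⟨h1, fun hs => h3 ⟨hs, h2⟩⟩
      · trivial
    | empty => exact ⟨∅, @MeasurableSet.empty _ (mG.prod mU), ∅, hN_empty, by simp⟩
    | compl t ht ih =>
      obtain ⟨Ach, hAch, n, hn, hsub⟩ := ih
      exact ⟨Achᶜ, hAch.compl, n, hn, by rwa [compl_symmDiff_compl]⟩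
    | iUnion f hf ih =>
      choose Ach hAch n hn hsub using ih
      refine ⟨⋃ i, Ach i, MeasurableSet.iUnion hAch, ⋃ i, n i, hN_iUnion _ hn, ?_⟩
      refine (symmDiff_iUnion_subset f Ach).trans ?_
      refine Set.iUnion_subset fun i => (hsub i).trans ?_
      exact Set.prod_mono (Set.subset_iUnion n i) le_rfl
  obtain ⟨Ach, hAch, N₀, hN₀, hsub⟩ := key A hA
  refine ⟨Ach, hAch, N₀, hN₀, ?_, hsub⟩
  intro x hx u
  by_contra h
  have : (x, u) ∈ symmDiff A Ach := by
    rw [Set.mem_symmDiff]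
    by_cases hA' : (x, u) ∈ A
    · exact Or.inl ⟨hA', fun hc => h ⟨fun _ => hc, fun _ => hA'⟩⟩
    · rcases Classical.em ((x, u) ∈ Ach) with hc | hc
      · exact Or.inr ⟨hc, hA'⟩
      · exact absurd ⟨fun h1 => absurd h1 hA', fun h1 => absurd h1 hc⟩ h
  exact hx (hsub this).1
end

section
/- Let (G, 𝒢) and (U, 𝒰) be measurable spaces and let 𝒩 be a σ-ideal of (G, 2^G). Let Y : G × U → ℝ be a (𝒢 ∨ 𝒩) ⊗ 𝒰-measurable function taking only finitely many values, Y = Σ_{k=1}^n α_k 𝟙_{A_k} with A_k ∈ (𝒢 ∨ 𝒩) ⊗ 𝒰 and α_k ∈ ℝ. Then there exist sets Ǎ₁, …, Ǎₙ ∈ 𝒢 ⊗ 𝒰, real numbers β₁, …, β_{2n}, and sets N₁, …, N_{2n} ⊆ G × U, each N_k contained in some product N × B with N ∈ 𝒩 and B ∈ 𝒰, such that Y = Σ_{k=1}^n α_k 𝟙_{Ǎ_k} + Σ_{k=1}^{2n} β_k 𝟙_{N_k}. In particular, there is a set N ∈ 𝒩 and a (𝒢 ⊗ 𝒰)-measurable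 function Ỹ : G × U → ℝ with Y(x, u) = Ỹ(x, u) for all x ∉ N and all u ∈ U. -/
open MeasurableSpace Set MeasureTheory

lemma symmDiff_iUnion_subset_s6 {X : Type*} (f T : ℕ → Set X) :
    symmDiff (⋃ i, f i) (⋃ i, T i) ⊆ ⋃ i, symmDiff (f i) (T i) := by
  intro x hx
  rw [Set.mem_symmDiff] at hx
  rcases hx with ⟨hf, hT⟩ | ⟨hT, hf⟩
  · simp only [Set.mem_iUnion, not_exists] at hf hT ⊢
    obtain ⟨i, hi⟩ := hf
    exact ⟨i, Set.mem_symmDiff.2 (Or.inl ⟨hi, hT i⟩)⟩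
  · simp only [Set.mem_iUnion, not_exists] at hf hT ⊢
    obtain ⟨i, hi⟩ := hT
    exact ⟨i, Set.mem_symmDiff.2 (Or.inr ⟨hi, hf i⟩)⟩

lemma aux1 {G : Type*} (mG : MeasurableSpace G) (N : Set (Set G))
    (hN_empty : (∅ : Set G) ∈ N)
    (hN_subset : ∀ A B : Set G, A ∈ N → B ⊆ A → B ∈ N)
    (hN_iUnion : ∀ f : ℕ → Set G, (∀ n, f n ∈ N) → (⋃ n, f n) ∈ N)
    {S : Set G} (hS : MeasurableSet[mG ⊔ MeasurableSpace.generateFrom N] S) :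
    ∃ T, MeasurableSet[mG] T ∧ symmDiff S T ∈ N := by
  let m' : MeasurableSpace G :=
  { MeasurableSet' := fun S => ∃ T, MeasurableSet[mG] T ∧ symmDiff S T ∈ N
    measurableSet_empty := ⟨∅, MeasurableSet.empty, by simpa using hN_empty⟩
    measurableSet_compl := by
      rintro S ⟨T, hT, hST⟩
      exact ⟨Tᶜ, hT.compl, by rwa [compl_symmDiff_compl]⟩
    measurableSet_iUnion := by
      rintro f hf
      choose T hT hTN using hf
      exact ⟨⋃ i, T i, MeasurableSet.iUnion hT,
        hN_subset _ _ (hN_iUnion _ hTN) (symmDiff_iUnion_subset_s6 f T)⟩ }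
  have h1 : mG ⊔ MeasurableSpace.generateFrom N ≤ m' := by
    refine sup_le ?_ ?_
    · intro S hS; exact ⟨S, hS, by simpa using hN_empty⟩
    · refine MeasurableSpace.generateFrom_le ?_
      intro S hS
      exact ⟨∅, @MeasurableSet.empty _ mG,
        by simpa [Set.symmDiff_def] using hN_subset _ _ hS subset_rfl⟩
  exact h1 S hS

lemma aux2 {G U : Type*} (mG : MeasurableSpace G) (mU : MeasurableSpace U)
    (N : Set (Set G))
    (hN_empty : (∅ : Set G) ∈ N)
    (hN_subset : ∀ A B : Set G, A ∈ N → B ⊆ A → B ∈ N)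
    (hN_iUnion : ∀ f : ℕ → Set G, (∀ n, f n ∈ N) → (⋃ n, f n) ∈ N)
    {S : Set (G × U)}
    (hS : MeasurableSet[(mG ⊔ MeasurableSpace.generateFrom N).prod mU] S) :
    ∃ T, MeasurableSet[mG.prod mU] T ∧ ∃ N₀ ∈ N, symmDiff S T ⊆ N₀ ×ˢ (Set.univ : Set U) := by
  let m' : MeasurableSpace (G × U) :=
  { MeasurableSet' := fun S => ∃ T, MeasurableSet[mG.prod mU] T ∧
      ∃ N₀ ∈ N, symmDiff S T ⊆ N₀ ×ˢ (Set.univ : Set U)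
    measurableSet_empty := ⟨∅, MeasurableSet.empty, ∅, hN_empty, by simp⟩
    measurableSet_compl := by
      rintro S ⟨T, hT, N₀, hN₀, hST⟩
      exact ⟨Tᶜ, hT.compl, N₀, hN₀, by rwa [compl_symmDiff_compl]⟩
    measurableSet_iUnion := by
      rintro f hf
      choose T hT N₀ hN₀ hTN using hf
      refine ⟨⋃ i, T i, MeasurableSet.iUnion hT, ⋃ i, N₀ i, hN_iUnion _ hN₀, ?_⟩
      refine (symmDiff_iUnion_subset_s6 f T).trans ?_
      intro x hx
      simp only [Set.mem_iUnion] at hx ⊢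
      obtain ⟨i, hi⟩ := hx
      have := hTN i hi
      simp only [Set.mem_prod, Set.mem_iUnion, Set.mem_univ, and_true] at this ⊢
      exact ⟨i, this⟩ }
  have h1 : (mG ⊔ MeasurableSpace.generateFrom N).prod mU ≤ m' := by
    rw [MeasurableSpace.prod]
    refine sup_le ?_ ?_
    · rintro _ ⟨S, hS, rfl⟩
      obtain ⟨T, hT, hTN⟩ := aux1 mG N hN_empty hN_subset hN_iUnion hS
      refine ⟨Prod.fst ⁻¹' T, (@measurable_fst G U mG mU) hT, symmDiff S T, hTN, ?_⟩
      · intro x hx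
        rw [Set.mem_symmDiff] at hx
        simp only [Set.mem_preimage] at hx
        constructor
        · rw [Set.mem_symmDiff]; tauto
        · trivial
    · rintro _ ⟨B, hB, rfl⟩
      exact ⟨Prod.snd ⁻¹' B, (@measurable_snd G U mG mU) hB, ∅, hN_empty, by simp⟩
  exact h1 S hS

/-- **Step 5 of the proof of Lemma 2: the simple-function case.**
Let `(G, mG)`, `(U, mU)` be measurable spaces and `N` a σ-ideal of `(G, 2^G)`.
If `Y = Σ_{k=1}^n α_k 𝟙_{A_k}` with `A_k ∈ (mG ∨ N) ⊗ mU`, then there are sets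
`Ǎ_k ∈ mG ⊗ mU`, reals `β_1, …, β_{2n}` and sets `N_1, …, N_{2n}` each contained in
a product `N₀ ×ˢ B` with `N₀ ∈ N`, `B ∈ mU`, such that
`Y = Σ_{k=1}^n α_k 𝟙_{Ǎ_k} + Σ_{k=1}^{2n} β_k 𝟙_{N_k}`.  In particular there are a
set `N₀ ∈ N` and a `mG ⊗ mU`-measurable `Ytil` with `Y (x, ·) = Ytil (x, ·)` for
all `x ∉ N₀`. -/
theorem stmt_6 {G U : Type*} (mG : MeasurableSpace G) (mU : MeasurableSpace U)
    (N : Set (Set G))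
    (hN_empty : (∅ : Set G) ∈ N)
    (hN_subset : ∀ A B : Set G, A ∈ N → B ⊆ A → B ∈ N)
    (hN_iUnion : ∀ f : ℕ → Set G, (∀ n, f n ∈ N) → (⋃ n, f n) ∈ N)
    (n : ℕ) (α : Fin n → ℝ) (A : Fin n → Set (G × U))
    (hA : ∀ k, MeasurableSet[(mG ⊔ generateFrom N).prod mU] (A k))
    (Y : G × U → ℝ)
    (hY : Y = fun p => ∑ k, α k * (A k).indicator (fun _ => (1 : ℝ)) p) :
    (∃ (Ach : Fin n → Set (G × U)) (β : Fin (2 * n) → ℝ)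
        (Ns : Fin (2 * n) → Set (G × U)),
      (∀ k, MeasurableSet[mG.prod mU] (Ach k)) ∧
      (∀ k, ∃ N₀ ∈ N, ∃ B : Set U, MeasurableSet[mU] B ∧ Ns k ⊆ N₀ ×ˢ B) ∧
      Y = fun p => (∑ k, α k * (Ach k).indicator (fun _ => (1 : ℝ)) p)
        + ∑ k, β k * (Ns k).indicator (fun _ => (1 : ℝ)) p) ∧
    ∃ N₀ ∈ N, ∃ Ytil : G × U → ℝ,
      @Measurable (G × U) ℝ (mG.prod mU) _ Ytil ∧
      ∀ x ∉ N₀, ∀ u : U, Y (x, u) = Ytil (x, u) := by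
  subst hY
  have haux := fun k => aux2 mG mU N hN_empty hN_subset hN_iUnion (hA k)
  choose Ach hAchM N₀f hN₀f hsym using haux
  set e : Fin (2 * n) ≃ Fin n ⊕ Fin n := (finCongr (two_mul n)).trans finSumFinEquiv.symm
    with he
  set β : Fin (2 * n) → ℝ := fun k => Sum.elim α (fun j => -α j) (e k) with hβ
  set Ns : Fin (2 * n) → Set (G × U) :=
    fun k => Sum.elim (fun j => A j \ Ach j) (fun j => Ach j \ A j) (e k) with hNs
  have hpoint : ∀ (k : Fin n) (p : G × U),
      (A k).indicator (fun _ => (1 : ℝ)) p =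
      (Ach k).indicator (fun _ => (1 : ℝ)) p
      + ((A k \ Ach k).indicator (fun _ => (1 : ℝ)) p
        - (Ach k \ A k).indicator (fun _ => (1 : ℝ)) p) := by
    intro k p
    by_cases h1 : p ∈ A k <;> by_cases h2 : p ∈ Ach k <;>
      simp [Set.indicator_apply, h1, h2]
  constructor
  · refine ⟨Ach, β, Ns, hAchM, ?_, ?_⟩
    · intro k
      rcases h : e k with j | j
      · refine ⟨N₀f j, hN₀f j, Set.univ, MeasurableSet.univ, ?_⟩
        have : Ns k = A j \ Ach j := by simp only [hNs]; rw [h]; rfl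
        rw [this]
        exact (Set.subset_union_left.trans (Set.symmDiff_def (A j) (Ach j) ▸ hsym j))
      · refine ⟨N₀f j, hN₀f j, Set.univ, MeasurableSet.univ, ?_⟩
        have : Ns k = Ach j \ A j := by simp only [hNs]; rw [h]; rfl
        rw [this]
        exact (Set.subset_union_right.trans (Set.symmDiff_def (A j) (Ach j) ▸ hsym j))
    · funext p
      have hsum := Equiv.sum_comp e (fun j => (Sum.elim α (fun i => -α i) j) *
        ((Sum.elim (fun i => A i \ Ach i) (fun i => Ach i \ A i) j).indicator
          (fun _ => (1 : ℝ)) p))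
      calc ∑ k, α k * (A k).indicator (fun _ => (1 : ℝ)) p
          = ∑ k, (α k * (Ach k).indicator (fun _ => (1 : ℝ)) p
            + (α k * (A k \ Ach k).indicator (fun _ => (1 : ℝ)) p
              + (-α k) * (Ach k \ A k).indicator (fun _ => (1 : ℝ)) p)) := by
            refine Finset.sum_congr rfl fun k _ => ?_
            rw [hpoint k p]; ring
        _ = (∑ k, α k * (Ach k).indicator (fun _ => (1 : ℝ)) p)
            + ((∑ k, α k * (A k \ Ach k).indicator (fun _ => (1 : ℝ)) p)
              + ∑ k, (-α k) * (Ach k \ A k).indicator (fun _ => (1 : ℝ)) p) := by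
            rw [Finset.sum_add_distrib, Finset.sum_add_distrib]
        _ = (∑ k, α k * (Ach k).indicator (fun _ => (1 : ℝ)) p)
            + ∑ k, β k * (Ns k).indicator (fun _ => (1 : ℝ)) p := by
            congr 1
            have h2 : (∑ k : Fin (2 * n), β k * (Ns k).indicator (fun _ => (1 : ℝ)) p)
                = (∑ k : Fin n, α k * (A k \ Ach k).indicator (fun _ => (1 : ℝ)) p)
                  + ∑ k : Fin n, (-α k) * (Ach k \ A k).indicator (fun _ => (1 : ℝ)) p := by
              exact hsum.trans (Fintype.sum_sum_type _)
            rw [h2]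
  · refine ⟨⋃ i : ℕ, (if h : i < n then N₀f ⟨i, h⟩ else ∅),
      hN_iUnion _ (fun i => by split <;> [exact hN₀f _; exact hN_empty]),
      fun p => ∑ k, α k * (Ach k).indicator (fun _ => (1 : ℝ)) p, ?_, ?_⟩
    · letI : MeasurableSpace (G × U) := mG.prod mU
      exact Finset.measurable_sum _ fun k _ =>
        (measurable_const.mul (measurable_const.indicator (hAchM k)))
    · intro x hx u
      refine Finset.sum_congr rfl fun k _ => ?_
      congr 1
      have hxk : x ∉ N₀f k := by
        intro hmem
        exact hx (Set.mem_iUnion.2 ⟨k.1, by rw [dif_pos k.isLt]; simpa using hmem⟩)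
      have hnot : (x, u) ∉ symmDiff (A k) (Ach k) := fun h => hxk (hsym k h).1
      have hiff : (x, u) ∈ A k ↔ (x, u) ∈ Ach k := by
        constructor
        · intro h; by_contra h2; exact hnot (Set.mem_symmDiff.2 (Or.inl ⟨h, h2⟩))
        · intro h; by_contra h2; exact hnot (Set.mem_symmDiff.2 (Or.inr ⟨h, h2⟩))
      classical
      rw [Set.indicator_apply, Set.indicator_apply]
      exact if_congr hiff rfl rfl
end

section
/- Let (Ω, ℱ, ℙ) be a complete probability space carrying a real-valued stochastic process X = (X_t)_{t ≥ 0} such that ℱ is the ℙ-completion of the σ-algebra σ(X) generated by the random variables X_t, t ≥ 0, and let (U, 𝒰) be a measurable space. Then for every ℱ ⊗ 𝒰-measurable process Y : Ω × U → ℝ there exists a measurable functional F : (ℝ^{[0,∞)} × U, (product σ-algebra) ⊗ 𝒰) → ℝ such that for ℙ-almost all ω ∈ Ω one has Y(ω, u) = F((X_t(ω))_{t ≥ 0}, u) for all u ∈ U. -/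
open MeasurableSpace Set MeasureTheory NNReal

lemma ereal_iInf_rat_gt_eq (x : ℝ) :
    (⨅ q : ℚ, if x < (q : ℝ) then ((q : ℝ) : EReal) else (⊤ : EReal)) = (x : EReal) := by
  classical
  refine le_antisymm ?_ (le_iInf fun q => ?_)
  · by_contra h
    push_neg at h
    obtain ⟨q, hq1, hq2⟩ := EReal.exists_rat_btwn_of_lt h
    have hxq : x < (q : ℝ) := by exact_mod_cast hq1
    have hle : (⨅ q : ℚ, if x < (q : ℝ) then ((q : ℝ) : EReal) else (⊤ : EReal))
        ≤ ((q : ℝ) : EReal) := iInf_le_of_le q (by simp [hxq])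
    exact absurd (hq2.trans_le hle) (lt_irrefl _)
  · by_cases hq : x < (q : ℝ)
    · simp only [if_pos hq]
      exact_mod_cast hq.le
    · simp [hq]

/-- **Theorem 3 (representation of parametrized processes by functionals).**
Let `(Ω, mΩ, P)` be a complete probability space carrying a real-valued stochastic
process `X = (X_t)_{t ≥ 0}` such that `mΩ` is the `P`-completion of the σ-algebra
`σ(X) = ⨆ t, σ(X_t)` generated by the process, and let `(U, mU)` be a measurable
space.  Then for every `mΩ ⊗ mU`-measurable process `Y : Ω × U → ℝ` there exists a
functional `F` on `ℝ^{[0,∞)} × U`, measurable for the product of the path-space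
product σ-algebra and `mU`, such that for `P`-almost all `ω` one has
`Y (ω, u) = F ((X_t(ω))_{t ≥ 0}, u)` for all `u ∈ U`. -/
theorem stmt_8 {Ω U : Type*} (mΩ : MeasurableSpace Ω) [mU : MeasurableSpace U]
    (P : @MeasureTheory.Measure Ω mΩ) [MeasureTheory.IsProbabilityMeasure P]
    (X : ℝ≥0 → Ω → ℝ)
    (hX : ∀ t, @Measurable Ω ℝ mΩ _ (X t))
    (hΩ : mΩ = (⨆ t : ℝ≥0, MeasurableSpace.comap (X t) (inferInstance : MeasurableSpace ℝ))
      ⊔ MeasurableSpace.generateFrom {s : Set Ω | P s = 0})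
    (Y : Ω × U → ℝ)
    (hY : @Measurable (Ω × U) ℝ (mΩ.prod mU) _ Y) :
    ∃ F : (ℝ≥0 → ℝ) × U → ℝ,
      @Measurable ((ℝ≥0 → ℝ) × U) ℝ ((MeasurableSpace.pi).prod mU) _ F ∧
      ∀ᵐ ω ∂P, ∀ u : U, Y (ω, u) = F (fun t => X t ω, u) := by
  classical
  set m₀ : MeasurableSpace Ω :=
    ⨆ t : ℝ≥0, MeasurableSpace.comap (X t) (inferInstance : MeasurableSpace ℝ) with hm₀
  -- Lemma A: every mΩ-measurable set is a.e. equal to an m₀-measurable set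
  have lemA : ∀ A : Set Ω, MeasurableSet[mΩ] A →
      ∃ B : Set Ω, MeasurableSet[m₀] B ∧ P ((A \ B) ∪ (B \ A)) = 0 := by
    intro A hA
    let C : MeasurableSpace Ω :=
      { MeasurableSet' := fun A => ∃ B, MeasurableSet[m₀] B ∧ P ((A \ B) ∪ (B \ A)) = 0
        measurableSet_empty := ⟨∅, @MeasurableSet.empty Ω m₀, by simp⟩
        measurableSet_compl := by
          rintro A ⟨B, hB, hAB⟩
          refine ⟨Bᶜ, hB.compl, ?_⟩
          have heq : (Aᶜ \ Bᶜ) ∪ (Bᶜ \ Aᶜ) = (A \ B) ∪ (B \ A) := by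
            ext x
            simp only [Set.mem_union, Set.mem_diff, Set.mem_compl_iff]
            tauto
          rw [heq]; exact hAB
        measurableSet_iUnion := by
          intro f hf
          choose B hB hPB using hf
          refine ⟨⋃ n, B n, MeasurableSet.iUnion hB, ?_⟩
          have hsub : ((⋃ n, f n) \ ⋃ n, B n) ∪ ((⋃ n, B n) \ ⋃ n, f n)
              ⊆ ⋃ n, ((f n \ B n) ∪ (B n \ f n)) := by
            intro x hx
            simp only [Set.mem_union, Set.mem_diff, Set.mem_iUnion, not_exists] at hx ⊢
            rcases hx with ⟨⟨n, hfn⟩, hBn⟩ | ⟨⟨n, hBn⟩, hfn⟩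
            · exact ⟨n, Or.inl ⟨hfn, hBn n⟩⟩
            · exact ⟨n, Or.inr ⟨hBn, hfn n⟩⟩
          refine measure_mono_null hsub (measure_iUnion_null fun n => hPB n) }
    have hle : mΩ ≤ C := by
      rw [hΩ]
      refine sup_le ?_ (MeasurableSpace.generateFrom_le ?_)
      · intro s hs
        exact ⟨s, hs, by simp⟩
      · intro s hs
        exact ⟨∅, @MeasurableSet.empty Ω m₀, by simpa using hs⟩
    exact hle A hA
  -- Lemma B: every (mΩ ⊗ mU)-measurable set has sections a.e. equal to
  -- those of an (m₀ ⊗ mU)-measurable set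
  have lemB : ∀ S : Set (Ω × U), MeasurableSet[mΩ.prod mU] S →
      ∃ T : Set (Ω × U), MeasurableSet[m₀.prod mU] T ∧
        ∃ N : Set Ω, P N = 0 ∧ ∀ ω ∉ N, ∀ u, ((ω, u) ∈ S ↔ (ω, u) ∈ T) := by
    intro S hS
    have hgen : mΩ.prod mU = MeasurableSpace.generateFrom
        (Set.image2 (· ×ˢ ·) {s : Set Ω | MeasurableSet[mΩ] s}
          {t : Set U | MeasurableSet[mU] t}) := (@generateFrom_prod Ω U mΩ mU).symm
    rw [hgen] at hS
    refine MeasurableSpace.generateFrom_induction _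
      (fun S _ => ∃ T, MeasurableSet[m₀.prod mU] T ∧
        ∃ N : Set Ω, P N = 0 ∧ ∀ ω ∉ N, ∀ u, ((ω, u) ∈ S ↔ (ω, u) ∈ T))
      ?_ ?_ ?_ ?_ S hS
    · rintro _ ⟨A, hA, V, hV, rfl⟩ _
      obtain ⟨B, hB, hAB⟩ := lemA A hA
      refine ⟨B ×ˢ V, @MeasurableSet.prod Ω U m₀ mU B V hB hV, (A \ B) ∪ (B \ A), hAB, ?_⟩
      intro ω hω u
      simp only [Set.mem_union, Set.mem_diff, not_or, not_and, not_not] at hω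
      have hiff : ω ∈ A ↔ ω ∈ B := ⟨fun h => hω.1 h, fun h => hω.2 h⟩
      simp only [Set.mem_prod]
      exact and_congr_left fun _ => hiff
    · exact ⟨∅, @MeasurableSet.empty (Ω × U) (m₀.prod mU), ∅, measure_empty, by simp⟩
    · rintro S hSm ⟨T, hT, N, hN, hTS⟩
      exact ⟨Tᶜ, hT.compl, N, hN, fun ω hω u => by
        simp only [Set.mem_compl_iff]
        exact not_congr (hTS ω hω u)⟩
    · intro f hfm hf
      choose T hT N hN h using hf
      refine ⟨⋃ n, T n, MeasurableSet.iUnion hT, ⋃ n, N n,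
        measure_iUnion_null fun n => hN n, ?_⟩
      intro ω hω u
      have hωn : ∀ n, ω ∉ N n := fun n hmem => hω (Set.mem_iUnion.2 ⟨n, hmem⟩)
      simp only [Set.mem_iUnion]
      exact exists_congr fun n => h n ω (hωn n) u
  -- the path map
  set ψ : Ω × U → (ℝ≥0 → ℝ) × U := fun p => (fun t => X t p.1, p.2) with hψdef
  have hφ : MeasurableSpace.comap (fun ω : Ω => fun t => X t ω)
      (MeasurableSpace.pi : MeasurableSpace (ℝ≥0 → ℝ)) = m₀ := by
    rw [hm₀]
    show MeasurableSpace.comap _ (⨆ t : ℝ≥0,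
      MeasurableSpace.comap (fun b : ℝ≥0 → ℝ => b t) (inferInstance : MeasurableSpace ℝ)) = _
    rw [MeasurableSpace.comap_iSup]
    exact iSup_congr fun t => by rw [MeasurableSpace.comap_comp]; rfl
  have hcomap : m₀.prod mU
      = MeasurableSpace.comap ψ ((MeasurableSpace.pi).prod mU) := by
    show m₀.comap Prod.fst ⊔ mU.comap Prod.snd = MeasurableSpace.comap ψ
      ((MeasurableSpace.pi : MeasurableSpace (ℝ≥0 → ℝ)).comap Prod.fst ⊔ mU.comap Prod.snd)
    rw [MeasurableSpace.comap_sup, MeasurableSpace.comap_comp, MeasurableSpace.comap_comp]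
    have h1 : (Prod.fst ∘ ψ : Ω × U → (ℝ≥0 → ℝ))
        = (fun ω : Ω => fun t => X t ω) ∘ Prod.fst := rfl
    have h2 : (Prod.snd ∘ ψ : Ω × U → U) = Prod.snd := rfl
    rw [h1, h2, ← MeasurableSpace.comap_comp, hφ]
  -- approximate the rational sublevel sets of Y
  have hSq : ∀ q : ℚ, MeasurableSet[mΩ.prod mU] {p : Ω × U | Y p < (q : ℝ)} :=
    fun q => hY measurableSet_Iio
  choose T hT N hN hTiff using fun q : ℚ => lemB _ (hSq q)
  have hTB : ∀ q : ℚ, ∃ B : Set ((ℝ≥0 → ℝ) × U),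
      MeasurableSet[(MeasurableSpace.pi).prod mU] B ∧ ψ ⁻¹' B = T q := by
    intro q
    have hq := hT q
    rw [hcomap] at hq
    exact MeasurableSpace.measurableSet_comap.mp hq
  choose B hB hBT using hTB
  refine ⟨fun p => (⨅ q : ℚ, if p ∈ B q then ((q : ℝ) : EReal) else (⊤ : EReal)).toReal, ?_, ?_⟩
  · refine Measurable.ereal_toReal ?_
    refine Measurable.iInf fun q => ?_
    exact Measurable.ite (hB q) measurable_const measurable_const
  · have hNull : P (⋃ q : ℚ, N q) = 0 := measure_iUnion_null fun q => hN q
    rw [ae_iff]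
    refine measure_mono_null ?_ hNull
    intro ω hω
    by_contra hmem
    apply hω
    intro u
    have hωn : ∀ q : ℚ, ω ∉ N q := fun q hq => hmem (Set.mem_iUnion.2 ⟨q, hq⟩)
    have hiff : ∀ q : ℚ, ((fun t => X t ω, u) ∈ B q) ↔ Y (ω, u) < (q : ℝ) := by
      intro q
      have h1 : (ω, u) ∈ T q ↔ (fun t => X t ω, u) ∈ B q := by
        rw [← hBT q]; exact Iff.rfl
      have h2 := hTiff q ω (hωn q) u
      exact h1.symm.trans h2.symm
    have key : (⨅ q : ℚ, if (fun t => X t ω, u) ∈ B q then ((q : ℝ) : EReal) else (⊤ : EReal))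
        = ((Y (ω, u) : ℝ) : EReal) := by
      rw [← ereal_iInf_rat_gt_eq (Y (ω, u))]
      exact iInf_congr fun q => if_congr (hiff q) rfl rfl
    show Y (ω, u)
      = (⨅ q : ℚ, if (fun t => X t ω, u) ∈ B q then ((q : ℝ) : EReal) else (⊤ : EReal)).toReal
    rw [key, EReal.toReal_coe]
end

section
/- Let (G, 𝒢, μ) be a probability space, let 𝒩 denote the collection of all subsets of G that are contained in some set of 𝒢 of μ-measure zero (the μ-null sets), and let 𝒢̄ = 𝒢 ∨ 𝒩 be the μ-completion of 𝒢. Let (U, 𝒰) be a measurable space. If Y : G × U → ℝ is 𝒢̄ ⊗ 𝒰-measurable, then there exists a (𝒢 ⊗ 𝒰)-measurable map Ỹ : G × U → ℝ such that Y and Ỹ are indistinguishable: there is a μ-null set N with Y(x, u) = Ỹ(x, u) for all x ∉ N and all u ∈ U. -/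
open MeasurableSpace Set MeasureTheory

/-- **Lemma 2 specialized to a completed probability space (the Remark).**
Let `(G, mG, μ)` be a probability space, let `N` be the σ-ideal of `μ`-null sets
(subsets of `mG`-measurable sets of `μ`-measure zero), and let `mG ∨ N` be the
`μ`-completion of `mG`.  Let `(U, mU)` be a measurable space.  If
`Y : G × U → ℝ` is `(mG ∨ N) ⊗ mU`-measurable, then there exists a
`mG ⊗ mU`-measurable `Ytil : G × U → ℝ` indistinguishable from `Y`: there is a
`μ`-null set `N₀` with `Y (x, u) = Ytil (x, u)` for all `x ∉ N₀` and all `u`. -/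
theorem stmt_9 {G U : Type*} (mG : MeasurableSpace G) (mU : MeasurableSpace U)
    (μ : @MeasureTheory.Measure G mG) [MeasureTheory.IsProbabilityMeasure μ]
    (N : Set (Set G))
    (hN : N = {s : Set G | ∃ t : Set G, MeasurableSet[mG] t ∧ μ t = 0 ∧ s ⊆ t})
    (Y : G × U → ℝ)
    (hY : @Measurable (G × U) ℝ ((mG ⊔ generateFrom N).prod mU) _ Y) :
    ∃ Ytil : G × U → ℝ, @Measurable (G × U) ℝ (mG.prod mU) _ Ytil ∧
      ∃ N₀ ∈ N, ∀ x ∉ N₀, ∀ u : U, Y (x, u) = Ytil (x, u) := by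
  classical
  letI : MeasurableSpace G := mG
  letI : MeasurableSpace U := mU
  -- Step 1: every set of the completion agrees with an `mG`-measurable set off a null set.
  have hle : ∀ s : Set G, MeasurableSet[mG ⊔ generateFrom N] s →
      ∃ B, MeasurableSet[mG] B ∧ ∃ t, MeasurableSet[mG] t ∧ μ t = 0 ∧
        ∀ x ∉ t, (x ∈ s ↔ x ∈ B) := by
    have h1 : mG ⊔ generateFrom N ≤
        MeasurableSpace.mk (fun s => NullMeasurableSet s μ)
          (MeasurableSet.empty.nullMeasurableSet)
          (fun s hs => hs.compl)
          (fun f hf => NullMeasurableSet.iUnion hf) := by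
      refine sup_le (fun s hs => hs.nullMeasurableSet) (generateFrom_le ?_)
      intro s hs
      rw [hN] at hs
      obtain ⟨t, -, hμt, hst⟩ := hs
      exact NullMeasurableSet.of_null (measure_mono_null hst hμt)
    intro s hs
    obtain ⟨B, hB, hsB⟩ := (h1 s hs : NullMeasurableSet s μ)
    refine ⟨B, hB, toMeasurable μ ((s \ B) ∪ (B \ s)), measurableSet_toMeasurable μ _, ?_, ?_⟩
    · rw [measure_toMeasurable]
      have h := ae_eq_set.mp hsB
      exact measure_union_null h.1 h.2
    · intro x hx
      have h₁ : x ∉ (s \ B) ∪ (B \ s) := fun h => hx (subset_toMeasurable μ _ h)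
      by_cases hxs : x ∈ s <;> by_cases hxB : x ∈ B <;> simp_all
  -- Step 2: same for product-measurable sets.
  have hC : ∀ A : Set (G × U), MeasurableSet[(mG ⊔ generateFrom N).prod mU] A →
      ∃ B, MeasurableSet[mG.prod mU] B ∧ ∃ t, MeasurableSet[mG] t ∧ μ t = 0 ∧
        ∀ x ∉ t, ∀ u : U, ((x, u) ∈ A ↔ (x, u) ∈ B) := by
    have hsup : (mG ⊔ generateFrom N).prod mU ≤
        MeasurableSpace.mk
          (fun A => ∃ B, MeasurableSet[mG.prod mU] B ∧ ∃ t, MeasurableSet[mG] t ∧ μ t = 0 ∧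
            ∀ x ∉ t, ∀ u : U, ((x, u) ∈ A ↔ (x, u) ∈ B))
          ⟨∅, MeasurableSet.empty, ∅, MeasurableSet.empty, measure_empty, by simp⟩
          (fun A hA => by
            obtain ⟨B, hB, t, ht, hμt, hAB⟩ := hA
            exact ⟨Bᶜ, hB.compl, t, ht, hμt, fun x hx u => not_congr (hAB x hx u)⟩)
          (fun f hf => by
            choose B hB t ht hμt hfB using hf
            refine ⟨⋃ i, B i, MeasurableSet.iUnion hB, ⋃ i, t i, MeasurableSet.iUnion ht,
              measure_iUnion_null hμt, fun x hx u => ?_⟩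
            simp only [mem_iUnion]
            exact exists_congr fun i => hfB i x (fun h => hx (mem_iUnion.2 ⟨i, h⟩)) u) := by
      refine sup_le ?_ ?_
      · rintro A ⟨s, hs, rfl⟩
        obtain ⟨B, hB, t, ht, hμt, hsB⟩ := hle s hs
        exact ⟨Prod.fst ⁻¹' B, hB.preimage measurable_fst, t, ht, hμt,
          fun x hx u => hsB x hx⟩
      · rintro A ⟨s, hs, rfl⟩
        exact ⟨Prod.snd ⁻¹' s, hs.preimage measurable_snd, ∅, MeasurableSet.empty,
          measure_empty, fun x _ u => Iff.rfl⟩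
    exact fun A hA => hsup A hA
  -- Step 3: correct the countably many rational sublevel sets.
  choose B hB t ht hμt hBt using fun q : ℚ => hC (Y ⁻¹' Iio (q : ℝ)) (hY measurableSet_Iio)
  set t₀ : Set G := ⋃ q : ℚ, t q with ht₀
  have ht₀m : MeasurableSet[mG] t₀ := MeasurableSet.iUnion ht
  have hμt₀ : μ t₀ = 0 := measure_iUnion_null hμt
  refine ⟨fun p => if p.1 ∈ t₀ then 0 else Y p, ?_, t₀, ?_, ?_⟩
  · apply measurable_of_Iio
    intro r
    have hset : (fun p : G × U => if p.1 ∈ t₀ then (0 : ℝ) else Y p) ⁻¹' Iio r =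
        ((t₀ᶜ ×ˢ (univ : Set U)) ∩ ⋃ q : ℚ, ⋃ _ : (q : ℝ) < r, B q) ∪
          (if (0 : ℝ) < r then t₀ ×ˢ (univ : Set U) else ∅) := by
      ext ⟨x, u⟩
      by_cases hx : x ∈ t₀
      · by_cases hr : (0 : ℝ) < r <;>
          simp [hx, hr, mem_preimage]
      · have hxq : ∀ q : ℚ, x ∉ t q := fun q h => hx (mem_iUnion.2 ⟨q, h⟩)
        simp only [mem_preimage, if_neg hx, mem_Iio, mem_union, mem_inter_iff,
          mem_prod, mem_compl_iff, mem_univ, and_true, mem_iUnion]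
        constructor
        · intro hYr
          obtain ⟨q, hq1, hq2⟩ := exists_rat_btwn hYr
          exact Or.inl ⟨hx, q, hq2, (hBt q x (hxq q) u).mp hq1⟩
        · rintro (⟨-, q, hq2, hq1⟩ | hmem)
          · exact lt_trans ((hBt q x (hxq q) u).mpr hq1) hq2
          · exfalso
            by_cases hr : (0 : ℝ) < r <;> simp [hr, hx] at hmem
    rw [hset]
    refine MeasurableSet.union (MeasurableSet.inter ?_ ?_) ?_
    · exact (ht₀m.compl).prod MeasurableSet.univ
    · exact MeasurableSet.iUnion fun q => MeasurableSet.iUnion fun _ => hB q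
    · split
      · exact ht₀m.prod MeasurableSet.univ
      · exact MeasurableSet.empty
  · rw [hN]; exact ⟨t₀, ht₀m, hμt₀, subset_rfl⟩
  · intro x hx u
    simp [hx]
end
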